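/- Let μ be the measure on ℝ² with density μ(dx,dy) = (e^{-x}/(2λ)) φ(λ + (y-x)/(2λ)) dx dy, where λ > 0. Then for A₂ = {(x,y) : x > 0 or y > 0}, μ(A₂) = 2Φ(λ). -/

import Mathlib

/-!
For fixed `x`, the density is `e^{-x}` times the `N(x - 2λ², 4λ²)` density in `y`. Hence the
half-plane `{x > 0}` has mass `∫_0^∞ e^{-x} dx = 1`, and the quadrant `{x ≤ 0, y > 0}` has mass
`∫_{-∞}^0 e^{-x} Φ((x - 2λ²)/(2λ)) dx`. The exponential tilt
`e^{-x} φ((x - 2λ²)/(2λ)) = φ((x + 2λ²)/(2λ))` shows that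
`Φ((x + 2λ²)/(2λ)) - e^{-x} Φ((x - 2λ²)/(2λ))` is an antiderivative of this integrand, and the
Chernoff bound `Φ(u) ≤ e^{cu + c²/2}` makes it vanish at `-∞`; so the quadrant has mass
`Φ(λ) - Φ(-λ) = 2Φ(λ) - 1`.
-/

open Real MeasureTheory

noncomputable def stdPhi (t : ℝ) : ℝ := (Real.sqrt (2 * Real.pi))⁻¹ * Real.exp (-t ^ 2 / 2)

noncomputable def stdPhiCDF (x : ℝ) : ℝ := ∫ t in Set.Iic x, stdPhi t

/-- Exponent measure of the bivariate Hüsler-Reiss distribution, with density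
`e^{-x}/(2λ) φ(λ + (y-x)/(2λ))` with respect to Lebesgue measure on ℝ². -/
noncomputable def HRexpMeasure (l : ℝ) : Measure (ℝ × ℝ) :=
  (volume : Measure (ℝ × ℝ)).withDensity
    (fun p => ENNReal.ofReal (Real.exp (-p.1) / (2 * l) * stdPhi (l + (p.2 - p.1) / (2 * l))))

open Set Filter Topology ProbabilityTheory

lemma stdPhi_eq_gaussianPDFReal : stdPhi = gaussianPDFReal 0 1 := by
  ext t
  simp [stdPhi, gaussianPDFReal]

lemma stdPhi_nonneg (t : ℝ) : 0 ≤ stdPhi t := by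
  rw [stdPhi_eq_gaussianPDFReal]
  exact gaussianPDFReal_nonneg 0 1 t

lemma integrable_stdPhi : Integrable stdPhi := by
  rw [stdPhi_eq_gaussianPDFReal]
  exact integrable_gaussianPDFReal 0 1

lemma integral_stdPhi : ∫ t, stdPhi t = 1 := by
  rw [stdPhi_eq_gaussianPDFReal]
  exact integral_gaussianPDFReal_eq_one 0 one_ne_zero

@[fun_prop]
lemma continuous_stdPhi : Continuous stdPhi := by
  unfold stdPhi
  fun_prop

lemma stdPhi_neg (t : ℝ) : stdPhi (-t) = stdPhi t := by
  simp [stdPhi]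

lemma stdPhiCDF_eq_cdf : stdPhiCDF = cdf (gaussianReal 0 1) := by
  ext x
  rw [cdf_eq_real, measureReal_def, gaussianReal_apply_eq_integral 0 one_ne_zero,
    ENNReal.toReal_ofReal (setIntegral_nonneg measurableSet_Iic fun t _ =>
      gaussianPDFReal_nonneg 0 1 t), stdPhiCDF, stdPhi_eq_gaussianPDFReal]

lemma stdPhiCDF_nonneg (x : ℝ) : 0 ≤ stdPhiCDF x := by
  rw [stdPhiCDF_eq_cdf]
  exact cdf_nonneg _ x

lemma stdPhiCDF_mono : Monotone stdPhiCDF := by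
  rw [stdPhiCDF_eq_cdf]
  exact monotone_cdf _

lemma tendsto_stdPhiCDF_atBot : Tendsto stdPhiCDF atBot (𝓝 0) := by
  rw [stdPhiCDF_eq_cdf]
  exact tendsto_cdf_atBot _

lemma stdPhiCDF_le_exp {c : ℝ} (hc : 0 ≤ c) (u : ℝ) :
    stdPhiCDF u ≤ exp (c * u + c ^ 2 / 2) := by
  have h := measure_le_le_exp_mul_mgf (X := id) (μ := gaussianReal 0 1) u (neg_nonpos.2 hc)
    (integrable_exp_mul_gaussianReal _)
  rw [mgf_id_gaussianReal, ← exp_add] at h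
  calc stdPhiCDF u = (gaussianReal 0 1).real {ω | id ω ≤ u} := by
        rw [stdPhiCDF_eq_cdf, cdf_eq_real]; rfl
    _ ≤ _ := h
    _ = _ := by norm_num

lemma hasDerivAt_stdPhiCDF (x : ℝ) : HasDerivAt stdPhiCDF (stdPhi x) x := by
  have hsplit : stdPhiCDF = fun y => stdPhiCDF 0 + ∫ t in (0:ℝ)..y, stdPhi t := by
    funext y
    rw [intervalIntegral.integral_Iic_sub_Iic integrable_stdPhi.integrableOn
      integrable_stdPhi.integrableOn |>.symm, stdPhiCDF, stdPhiCDF, add_sub_cancel]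
  rw [hsplit]
  exact (intervalIntegral.integral_hasDerivAt_right integrable_stdPhi.intervalIntegrable
    continuous_stdPhi.stronglyMeasurable.stronglyMeasurableAtFilter
    continuous_stdPhi.continuousAt).const_add _

lemma continuous_stdPhiCDF : Continuous stdPhiCDF :=
  continuous_iff_continuousAt.2 fun x => (hasDerivAt_stdPhiCDF x).continuousAt

lemma integrable_stdPhi_sub_div (m : ℝ) {s : ℝ} (hs : s ≠ 0) :
    Integrable fun y => stdPhi ((y - m) / s) :=
  (integrable_stdPhi.comp_div hs).comp_sub_right m

lemma integral_stdPhi_sub_div (m : ℝ) {s : ℝ} (hs : 0 < s) :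
    ∫ y, stdPhi ((y - m) / s) = s := by
  rw [integral_sub_right_eq_self (fun y => stdPhi (y / s)), Measure.integral_comp_div,
    integral_stdPhi, abs_of_pos hs, smul_eq_mul, mul_one]

lemma setIntegral_Ioi_stdPhi_sub_div (m b : ℝ) {s : ℝ} (hs : 0 < s) :
    ∫ y in Ioi b, stdPhi ((y - m) / s) = s * stdPhiCDF ((m - b) / s) := by
  have hderiv (y : ℝ) :
      HasDerivAt (fun y => -(s * stdPhiCDF ((m - y) / s))) (stdPhi ((y - m) / s)) y := by
    have h := ((hasDerivAt_stdPhiCDF ((m - y) / s)).comp y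
      (((hasDerivAt_id y).const_sub m).div_const s)).const_mul s |>.neg
    refine h.congr_deriv ?_
    rw [show (y - m) / s = -((m - y) / s) by ring, stdPhi_neg]
    field_simp
  have htendsto : Tendsto (fun y => -(s * stdPhiCDF ((m - y) / s))) atTop (𝓝 0) := by
    have h : Tendsto (fun y : ℝ => (m - y) / s) atTop atBot :=
      (tendsto_atBot_add_const_left _ m tendsto_neg_atTop_atBot).atBot_div_const hs
    simpa using ((tendsto_stdPhiCDF_atBot.comp h).const_mul s).neg
  rw [integral_Ioi_of_hasDerivAt_of_nonneg (hderiv b).continuousAt.continuousWithinAt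
    (fun y _ => hderiv y) (fun y _ => stdPhi_nonneg _) htendsto]
  ring

lemma stdPhiCDF_neg (x : ℝ) : stdPhiCDF (-x) = 1 - stdPhiCDF x := by
  have h := setIntegral_Ioi_stdPhi_sub_div 0 x one_pos
  simp only [sub_zero, div_one, zero_sub, one_mul] at h
  rw [← h, ← integral_stdPhi, ← intervalIntegral.integral_Iic_add_Ioi (b := x)
    integrable_stdPhi.integrableOn integrable_stdPhi.integrableOn, stdPhiCDF, add_sub_cancel_left]

section

variable {l : ℝ}

lemma exp_neg_mul_stdPhi (hl : 0 < l) (x : ℝ) :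
    exp (-x) * stdPhi ((x - 2 * l ^ 2) / (2 * l)) = stdPhi ((x + 2 * l ^ 2) / (2 * l)) := by
  simp only [stdPhi]
  rw [mul_left_comm, ← exp_add]
  congr 2
  field_simp
  ring

lemma exp_neg_mul_stdPhiCDF_le (hl : 0 < l) (x : ℝ) :
    exp (-x) * stdPhiCDF ((x - 2 * l ^ 2) / (2 * l)) ≤ exp (4 * l ^ 2) * exp x := by
  calc exp (-x) * stdPhiCDF ((x - 2 * l ^ 2) / (2 * l))
      ≤ exp (-x) * exp (4 * l * ((x - 2 * l ^ 2) / (2 * l)) + (4 * l) ^ 2 / 2) :=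
        mul_le_mul_of_nonneg_left (stdPhiCDF_le_exp (by positivity) _) (exp_nonneg _)
    _ = exp (4 * l ^ 2) * exp x := by
        rw [← exp_add, ← exp_add]
        congr 1
        field_simp
        ring

lemma integrableOn_exp_neg_mul_stdPhiCDF (hl : 0 < l) (a : ℝ) :
    IntegrableOn (fun x => exp (-x) * stdPhiCDF ((x - 2 * l ^ 2) / (2 * l))) (Iic a) := by
  refine Integrable.mono' ((integrableOn_exp_Iic a).const_mul (exp (4 * l ^ 2))) ?_
    (ae_of_all _ fun x => ?_)
  · exact ((continuous_exp.comp continuous_neg).mul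
      (continuous_stdPhiCDF.comp (by fun_prop))).aestronglyMeasurable
  · rw [norm_of_nonneg (mul_nonneg (exp_nonneg _) (stdPhiCDF_nonneg _))]
    exact exp_neg_mul_stdPhiCDF_le hl x

lemma integral_Iic_exp_neg_mul_stdPhiCDF (hl : 0 < l) (a : ℝ) :
    ∫ x in Iic a, exp (-x) * stdPhiCDF ((x - 2 * l ^ 2) / (2 * l)) =
      stdPhiCDF ((a + 2 * l ^ 2) / (2 * l)) - exp (-a) * stdPhiCDF ((a - 2 * l ^ 2) / (2 * l)) := by
  set G : ℝ → ℝ := fun x =>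
    stdPhiCDF ((x + 2 * l ^ 2) / (2 * l)) - exp (-x) * stdPhiCDF ((x - 2 * l ^ 2) / (2 * l))
  have hderiv (x : ℝ) : HasDerivAt G (exp (-x) * stdPhiCDF ((x - 2 * l ^ 2) / (2 * l))) x := by
    have hplus := (hasDerivAt_stdPhiCDF _).comp x
      (((hasDerivAt_id x).add_const (2 * l ^ 2)).div_const (2 * l))
    have hminus := (hasDerivAt_stdPhiCDF _).comp x
      (((hasDerivAt_id x).sub_const (2 * l ^ 2)).div_const (2 * l))
    refine (hplus.sub ((hasDerivAt_neg x).exp.mul hminus)).congr_deriv ?_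
    simp only [id, Function.comp_def]
    rw [← exp_neg_mul_stdPhi hl x]
    ring
  have hG : Tendsto G atBot (𝓝 0) := by
    have hplus : Tendsto (fun x : ℝ => (x + 2 * l ^ 2) / (2 * l)) atBot atBot :=
      (tendsto_atBot_add_const_right _ _ tendsto_id).atBot_div_const (by positivity)
    have hbound : Tendsto (fun x => exp (4 * l ^ 2) * exp x) atBot (𝓝 0) := by
      simpa using tendsto_exp_atBot.const_mul (exp (4 * l ^ 2))
    have hminus :
        Tendsto (fun x => exp (-x) * stdPhiCDF ((x - 2 * l ^ 2) / (2 * l))) atBot (𝓝 0) :=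
      tendsto_of_tendsto_of_tendsto_of_le_of_le tendsto_const_nhds hbound
        (fun x => mul_nonneg (exp_nonneg _) (stdPhiCDF_nonneg _)) (exp_neg_mul_stdPhiCDF_le hl)
    simpa using (tendsto_stdPhiCDF_atBot.comp hplus).sub hminus
  rw [integral_Iic_of_hasDerivAt_of_tendsto (hderiv a).continuousAt.continuousWithinAt
    (fun x _ => hderiv x) (integrableOn_exp_neg_mul_stdPhiCDF hl a) hG, sub_zero]

lemma HRexpMeasure_prod (hl : 0 < l) {s t : Set ℝ} (hs : MeasurableSet s) (ht : MeasurableSet t) :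
    HRexpMeasure l (s ×ˢ t) = ∫⁻ x in s,
      ENNReal.ofReal (exp (-x) / (2 * l) * ∫ y in t, stdPhi ((y - (x - 2 * l ^ 2)) / (2 * l))) := by
  have hdensity : Measurable fun p : ℝ × ℝ =>
      ENNReal.ofReal (exp (-p.1) / (2 * l) * stdPhi (l + (p.2 - p.1) / (2 * l))) := by
    fun_prop
  rw [HRexpMeasure, withDensity_apply _ (hs.prod ht), Measure.volume_eq_prod,
    ← Measure.prod_restrict, lintegral_prod _ hdensity.aemeasurable]
  refine lintegral_congr fun x => ?_
  have hshift (y : ℝ) : l + (y - x) / (2 * l) = (y - (x - 2 * l ^ 2)) / (2 * l) := by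
    field_simp
    ring
  simp_rw [hshift]
  rw [← integral_const_mul, ofReal_integral_eq_lintegral_ofReal
    ((integrable_stdPhi_sub_div _ (by positivity)).const_mul _).integrableOn
    (ae_of_all _ fun y => mul_nonneg (by positivity) (stdPhi_nonneg _))]

lemma HRexpMeasure_Ioi_prod_univ (hl : 0 < l) : HRexpMeasure l (Ioi (0 : ℝ) ×ˢ univ) = 1 := by
  rw [HRexpMeasure_prod hl measurableSet_Ioi MeasurableSet.univ]
  simp_rw [Measure.restrict_univ, integral_stdPhi_sub_div _ (by positivity : 0 < 2 * l),
    div_mul_cancel₀ _ (by positivity : 2 * l ≠ 0)]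
  have hexp : IntegrableOn (fun x : ℝ => exp (-x)) (Ioi 0) := by
    simpa using exp_neg_integrableOn_Ioi 0 one_pos
  rw [← ofReal_integral_eq_lintegral_ofReal hexp
    (ae_of_all _ fun x => exp_nonneg _), integral_exp_neg_Ioi_zero, ENNReal.ofReal_one]

lemma HRexpMeasure_Iic_prod_Ioi (hl : 0 < l) :
    HRexpMeasure l (Iic (0 : ℝ) ×ˢ Ioi 0) = ENNReal.ofReal (stdPhiCDF l - stdPhiCDF (-l)) := by
  rw [HRexpMeasure_prod hl measurableSet_Iic measurableSet_Ioi]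
  have hcancel (x : ℝ) : exp (-x) / (2 * l) * (2 * l * stdPhiCDF ((x - 2 * l ^ 2) / (2 * l))) =
      exp (-x) * stdPhiCDF ((x - 2 * l ^ 2) / (2 * l)) := by
    field_simp
  simp_rw [setIntegral_Ioi_stdPhi_sub_div _ _ (by positivity : 0 < 2 * l), sub_zero, hcancel]
  rw [← ofReal_integral_eq_lintegral_ofReal (integrableOn_exp_neg_mul_stdPhiCDF hl 0)
    (ae_of_all _ fun x => mul_nonneg (exp_nonneg _) (stdPhiCDF_nonneg _)),
    integral_Iic_exp_neg_mul_stdPhiCDF hl]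
  have hplus : (0 + 2 * l ^ 2) / (2 * l) = l := by field_simp; ring
  have hminus : (0 - 2 * l ^ 2) / (2 * l) = -l := by field_simp; ring
  rw [hplus, hminus, neg_zero, exp_zero, one_mul]

end

/-- The exponent measure of the set where at least one coordinate is positive is 2Φ(λ). -/
theorem HRexpMeasure_A2 (l : ℝ) (hl : 0 < l) :
    HRexpMeasure l {p : ℝ × ℝ | 0 < p.1 ∨ 0 < p.2} = ENNReal.ofReal (2 * stdPhiCDF l) := by
  have hsplit : {p : ℝ × ℝ | 0 < p.1 ∨ 0 < p.2} = Ioi 0 ×ˢ univ ∪ Iic 0 ×ˢ Ioi 0 := by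
    ext ⟨x, y⟩
    by_cases hx : 0 < x <;> simp [hx, le_of_not_gt]
  have hdisjoint : Disjoint (Ioi (0 : ℝ) ×ˢ (univ : Set ℝ)) (Iic 0 ×ˢ Ioi 0) :=
    disjoint_prod.2 (Or.inl (Iic_disjoint_Ioi le_rfl).symm)
  rw [hsplit, measure_union hdisjoint (measurableSet_Iic.prod measurableSet_Ioi),
    HRexpMeasure_Ioi_prod_univ hl, HRexpMeasure_Iic_prod_Ioi hl, ← ENNReal.ofReal_one,
    ← ENNReal.ofReal_add zero_le_one (sub_nonneg.2 (stdPhiCDF_mono (by linarith))),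
    stdPhiCDF_neg]
  congr 1
  ring
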